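/- arXiv:2405.04801 — 2 statements merged into one kernel-verified Lean document; each statement's English description precedes it below -/
import Mathlib

section
/- There are no nontrivial repdigits expressible as the difference of two Lucas-balancing numbers; that is, the equation C_n − C_m = d·(10^k − 1)/9 has no solutions in integers n > m ≥ 0, 1 ≤ d ≤ 9, k ≥ 2. -/
def C : ℕ → ℤ
  | 0 => 1
  | 1 => 3
  | n + 2 => 6 * C (n + 1) - C n

lemma C_pair_mem (n : ℕ) :
    ((C n : ZMod 440), (C (n + 1) : ZMod 440)) ∈
      ({(1,3),(3,17),(17,99),(99,137),(137,283),(283,241),(241,283),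
        (283,137),(137,99),(99,17),(17,3),(3,1)} : Finset (ZMod 440 × ZMod 440)) := by
  induction n with
  | zero => simp [C]
  | succ k ih =>
      have hrec : C (k + 2) = 6 * C (k + 1) - C k := rfl
      have hcast : (C (k + 2) : ZMod 440) = 6 * (C (k + 1) : ZMod 440) - (C k : ZMod 440) := by
        rw [hrec]; push_cast; ring
      rw [show k + 1 + 1 = k + 2 from rfl, hcast]
      simp only [Finset.mem_insert, Finset.mem_singleton, Prod.mk.injEq] at ih ⊢
      rcases ih with ⟨h1,h2⟩|⟨h1,h2⟩|⟨h1,h2⟩|⟨h1,h2⟩|⟨h1,h2⟩|⟨h1,h2⟩|⟨h1,h2⟩|⟨h1,h2⟩|⟨h1,h2⟩|⟨h1,h2⟩|⟨h1,h2⟩|⟨h1,h2⟩ <;>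
        rw [h1, h2] <;> decide

lemma C_mem (n : ℕ) :
    (C n : ZMod 440) ∈ ({1,3,17,99,137,283,241} : Finset (ZMod 440)) := by
  have h := C_pair_mem n
  simp only [Finset.mem_insert, Finset.mem_singleton, Prod.mk.injEq] at h ⊢
  rcases h with ⟨h1,_⟩|⟨h1,_⟩|⟨h1,_⟩|⟨h1,_⟩|⟨h1,_⟩|⟨h1,_⟩|⟨h1,_⟩|⟨h1,_⟩|⟨h1,_⟩|⟨h1,_⟩|⟨h1,_⟩|⟨h1,_⟩ <;>
    rw [h1] <;> decide

lemma pow10_mem (k : ℕ) (hk : 2 ≤ k) :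
    ((10 : ZMod 440) ^ k) ∈ ({100,120,320} : Finset (ZMod 440)) := by
  induction k, hk using Nat.le_induction with
  | base => decide
  | succ n hn ih =>
      rw [pow_succ]
      simp only [Finset.mem_insert, Finset.mem_singleton] at ih ⊢
      rcases ih with h|h|h <;> rw [h] <;> decide

theorem no_lucas_balancing_repdigit_diff :
    ¬ ∃ (n m k : ℕ) (d : ℤ), m < n ∧ 1 ≤ d ∧ d ≤ 9 ∧ 2 ≤ k ∧
      9 * (C n - C m) = d * (10 ^ k - 1) := by
  rintro ⟨n, m, k, d, _, hd1, hd9, hk, heq⟩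
  have h : (9 : ZMod 440) * ((C n : ZMod 440) - (C m : ZMod 440)) =
      (d : ZMod 440) * ((10 : ZMod 440) ^ k - 1) := by
    have := congrArg (fun z : ℤ => (z : ZMod 440)) heq
    push_cast at this
    exact this
  have ha := C_mem n
  have hb := C_mem m
  have hp := pow10_mem k hk
  simp only [Finset.mem_insert, Finset.mem_singleton] at ha hb hp
  interval_cases d <;> push_cast at h <;>
    rcases ha with h1|h1|h1|h1|h1|h1|h1 <;>
    rcases hb with h2|h2|h2|h2|h2|h2|h2 <;>
    rcases hp with h3|h3|h3 <;>
    rw [h1, h2, h3] at h <;> revert h <;> decide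
end

section
/- Let r ≥ 1 and H > 0 be real numbers with H > (4r²)^r, and let L > 0 satisfy H > L/(log L)^r. Then L < 2^r · H · (log H)^r. -/
lemma log_le_sqrt_aux (t : ℝ) (ht : 0 < t) : Real.log t ≤ Real.sqrt t := by
  have hs : 0 < Real.sqrt t := Real.sqrt_pos.mpr ht
  have h1 : Real.log (Real.sqrt t / 2) ≤ Real.sqrt t / 2 - 1 :=
    Real.log_le_sub_one_of_pos (by positivity)
  have h2 : Real.log t = 2 * Real.log (Real.sqrt t) := by
    have := Real.log_sqrt ht.le
    linarith
  have h3 : Real.log (Real.sqrt t) = Real.log (Real.sqrt t / 2) + Real.log 2 := by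
    rw [← Real.log_mul (by positivity) (by norm_num)]
    ring_nf
  have hlog2 : Real.log 2 < 1 := by
    have := Real.log_two_lt_d9; linarith
  linarith

theorem sanchez_luca_lemma (r H L : ℝ) (hr : 1 ≤ r) (hH : 0 < H)
    (hH2 : H > (4 * r ^ 2) ^ r) (hL : 0 < L)
    (hHL : H > L / (Real.log L) ^ r) :
    L < 2 ^ r * H * (Real.log H) ^ r := by
  have hr0 : (0:ℝ) < r := lt_of_lt_of_le one_pos hr
  have h4r : (4:ℝ) ≤ 4 * r ^ 2 := by nlinarith
  have hH4 : (4:ℝ) < H := by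
    calc (4:ℝ) ≤ 4 * r ^ 2 := h4r
    _ = (4 * r ^ 2) ^ (1:ℝ) := (Real.rpow_one _).symm
    _ ≤ (4 * r ^ 2) ^ r := Real.rpow_le_rpow_of_exponent_le (by linarith) hr
    _ < H := hH2
  have hlog4 : Real.log 4 = 2 * Real.log 2 := by
    rw [show (4:ℝ) = 2 ^ 2 by norm_num, Real.log_pow]; push_cast; ring
  have hlogH : 1 < Real.log H := by
    have h1 : Real.log 4 < Real.log H := Real.log_lt_log (by norm_num) hH4
    have := Real.log_two_gt_d9
    nlinarith
  have h2r : (2:ℝ) ≤ (2:ℝ) ^ r := by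
    calc (2:ℝ) = 2 ^ (1:ℝ) := (Real.rpow_one 2).symm
    _ ≤ 2 ^ r := Real.rpow_le_rpow_of_exponent_le one_le_two hr
  have hlogHr : 1 ≤ Real.log H ^ r := by
    calc (1:ℝ) = 1 ^ r := (Real.one_rpow r).symm
    _ ≤ Real.log H ^ r := Real.rpow_le_rpow zero_le_one hlogH.le hr0.le
  by_cases hcase : L ≤ H
  · have h1 : (2:ℝ) * 1 ≤ 2 ^ r * Real.log H ^ r :=
      mul_le_mul h2r hlogHr zero_le_one (by positivity)
    nlinarith
  push_neg at hcase
  have hlogL : Real.log H < Real.log L := Real.log_lt_log hH hcase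
  have hlogL1 : 1 < Real.log L := lt_trans hlogH hlogL
  have hlogLr : 0 < Real.log L ^ r := Real.rpow_pos_of_pos (by linarith) r
  have hL' : L < H * Real.log L ^ r := by
    rw [gt_iff_lt, div_lt_iff₀ hlogLr] at hHL
    linarith
  by_cases hsub : Real.log L ≤ 2 * Real.log H
  · have h1 : Real.log L ^ r ≤ (2 * Real.log H) ^ r :=
      Real.rpow_le_rpow (by linarith) hsub hr0.le
    have hm : (2 * Real.log H) ^ r = 2 ^ r * Real.log H ^ r :=
      Real.mul_rpow (by norm_num) (by linarith)
    calc L < H * Real.log L ^ r := hL'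
    _ ≤ H * (2 ^ r * Real.log H ^ r) := by
        rw [← hm]; exact mul_le_mul_of_nonneg_left h1 hH.le
    _ = 2 ^ r * H * Real.log H ^ r := by ring
  · exfalso
    push_neg at hsub
    have hH2L : H * H < L := by
      have h1 : Real.exp (2 * Real.log H) < Real.exp (Real.log L) :=
        Real.exp_lt_exp.mpr hsub
      rwa [Real.exp_log hL, two_mul, Real.exp_add, Real.exp_log hH] at h1
    have htH : H < Real.log L ^ r := by nlinarith
    have ht4r : 4 * r ^ 2 < Real.log L := by
      by_contra h
      push_neg at h
      have : Real.log L ^ r ≤ (4 * r ^ 2) ^ r :=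
        Real.rpow_le_rpow (by linarith) h hr0.le
      linarith
    have hkey : Real.log L < Real.log H + r * Real.log (Real.log L) := by
      have h1 : Real.log L < Real.log (H * Real.log L ^ r) := Real.log_lt_log hL hL'
      rwa [Real.log_mul (ne_of_gt hH) (ne_of_gt hlogLr),
        Real.log_rpow (by linarith : (0:ℝ) < Real.log L)] at h1
    have hsq : Real.log (Real.log L) ≤ Real.sqrt (Real.log L) :=
      log_le_sqrt_aux _ (by linarith)
    have hs : 2 * r < Real.sqrt (Real.log L) := by
      have h1 : Real.sqrt (4 * r ^ 2) < Real.sqrt (Real.log L) :=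
        Real.sqrt_lt_sqrt (by positivity) ht4r
      rwa [show (4:ℝ) * r ^ 2 = (2 * r) ^ 2 by ring,
        Real.sqrt_sq (by positivity)] at h1
    have hsqt : Real.sqrt (Real.log L) ^ 2 = Real.log L :=
      Real.sq_sqrt (by linarith)
    have hsn : 0 ≤ Real.sqrt (Real.log L) := Real.sqrt_nonneg _
    nlinarith [mul_le_mul_of_nonneg_left hsq hr0.le,
      mul_lt_mul_of_pos_right hs (lt_of_le_of_lt (by positivity : (0:ℝ) ≤ 2 * r) hs)]
end
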